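/- Let $V=\bigoplus_{n\in\mathbb{Z}}V_n$ be a graded vector space with $\dim V<\infty$. Suppose $e:V\to V$ maps $V_n$ to $V_{n+2}$, $h$ acts on $V_n$ by the scalar $n$, $e$ is such that $e^n:V_{-n}\to V_n$ is an isomorphism for all $n\ge 0$ (hard Lefschetz). Then there exists a unique linear operator $f:V\to V$ mapping $V_n$ to $V_{n-2}$ such that $(e,h,f)$ is an $\mathfrak{sl}_2$-triple, i.e. $[h,e]=2e$, $[h,f]=-2f$, $[e,f]=h$. -/

import Mathlib

/-!
Hard Lefschetz yields the Lefschetz decomposition. With `P n = ker e^(n+1) ∩ V₋ₙ` the primitive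
vectors, `V₋ₙ = P n + e V₋ₙ₋₂`; as the grading is bounded and `Vₙ = e^n V₋ₙ`, the strings
`e^k b` (`b` running over a basis of `P n`, `0 ≤ k ≤ n`) span `V`. They are independent because
applying `e^(n-k)` to the homogeneous component of a relation kills every string shorter than
the longest one involved, leaving `e^n` applied to a combination in `P n`.

Define `f` on this basis by `f (e^k b) = k (n - k + 1) e^(k-1) b`, the lowering operator of the
irreducible `sl₂`-module of highest weight `n`; `[e, f] = h` is then a check on each string, and
`[h, e] = 2e`, `[h, f] = -2f` only say that `e` and `f` shift the degree by `±2`.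
For uniqueness, the difference `D` of two solutions commutes with `e` and lowers the degree by
`2`; for primitive `b` of degree `-n`, `e^(n+1) (D b) = D (e^(n+1) b) = 0` with `D b ∈ V₋ₙ₋₂`, so
`D b = 0` by injectivity of `e^(n+2)` there, and `D` kills every string.
-/

open Module Submodule

namespace DirectSum.IsInternal

variable {K V : Type*} [CommRing K] [AddCommGroup V] [Module K V] {Vn : ℤ → Submodule K V}

noncomputable def proj (hdec : DirectSum.IsInternal Vn) (m : ℤ) : Module.End K V :=
  (Vn m).subtype ∘ₗ DirectSum.component K ℤ (fun i => Vn i) m ∘ₗ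
    (LinearEquiv.ofBijective (DirectSum.coeLinearMap Vn) hdec).symm.toLinearMap

theorem proj_of_mem (hdec : DirectSum.IsInternal Vn) {m : ℤ} {v : V} (hv : v ∈ Vn m) :
    hdec.proj m v = v := by
  simp [proj, ← DirectSum.apply_eq_component, hdec.ofBijective_coeLinearMap_of_mem hv]

theorem proj_of_mem_ne (hdec : DirectSum.IsInternal Vn) {m m' : ℤ} (hm : m' ≠ m) {v : V}
    (hv : v ∈ Vn m') : hdec.proj m v = 0 := by
  simp [proj, ← DirectSum.apply_eq_component, hdec.ofBijective_coeLinearMap_of_mem_ne hm hv]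

theorem mapsTo_of_spanning_homogeneous (hdec : DirectSum.IsInternal Vn) {ι : Type*}
    {s : ι → V} (deg : ι → ℤ) (hs : ∀ i, s i ∈ Vn (deg i)) (hspan : span K (Set.range s) = ⊤)
    {g : Module.End K V} {d : ℤ} (hg : ∀ i, g (s i) ∈ Vn (deg i + d))
    {m : ℤ} {v : V} (hv : v ∈ Vn m) : g v ∈ Vn (m + d) := by
  obtain ⟨c, rfl⟩ := Finsupp.mem_span_range_iff_exists_finsupp.mp (hspan ▸ mem_top : v ∈ _)
  rw [← hdec.proj_of_mem hv, map_finsuppSum, map_finsuppSum]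
  refine sum_mem fun i _ => ?_
  simp only [map_smul]
  refine smul_mem _ _ ?_
  by_cases hi : deg i = m
  · rw [hdec.proj_of_mem (hi ▸ hs i), ← hi]
    exact hg i
  · rw [hdec.proj_of_mem_ne hi (hs i), map_zero]
    exact zero_mem _

theorem commutator_eq_smul_of_mapsTo (hdec : DirectSum.IsInternal Vn) {h g : Module.End K V}
    (hh : ∀ m : ℤ, ∀ v ∈ Vn m, h v = (m : K) • v) {d : ℤ}
    (hg : ∀ m : ℤ, ∀ v ∈ Vn m, g v ∈ Vn (m + d)) :
    h * g - g * h = (d : K) • g := by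
  ext v
  refine iSup_induction Vn (motive := fun v => (h * g - g * h) v = ((d : K) • g) v)
    (hdec.submodule_iSup_eq_top ▸ mem_top) (fun m v hv => ?_) (by simp) (fun _ _ hx hy => ?_)
  · simp only [LinearMap.sub_apply, Module.End.mul_apply, LinearMap.smul_apply,
      hh _ _ (hg m v hv), hh m v hv, map_smul]
    push_cast
    module
  · simp only [map_add, hx, hy]

end DirectSum.IsInternal

namespace Lefschetz

variable {K V : Type*} [Field K] [AddCommGroup V] [Module K V]
  {Vn : ℤ → Submodule K V} {e : Module.End K V}

theorem pow_mem (he : ∀ n : ℤ, ∀ v ∈ Vn n, e v ∈ Vn (n + 2)) (j : ℕ) {m : ℤ} {v : V}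
    (hv : v ∈ Vn m) : (e ^ j) v ∈ Vn (m + 2 * j) := by
  induction j with
  | zero => simpa using hv
  | succ j ih =>
    rw [pow_succ', Module.End.mul_apply, Nat.cast_succ, mul_add_one, ← add_assoc]
    exact he _ _ ih

theorem eq_zero_of_pow_apply_eq_zero
    (hHL : ∀ n : ℕ, Set.BijOn (⇑(e ^ n)) (Vn (-(n : ℤ)) : Set V) (Vn (n : ℤ)))
    {n j : ℕ} (hj : j ≤ n) {v : V} (hv : v ∈ Vn (-(n : ℤ))) (h0 : (e ^ j) v = 0) : v = 0 := by
  refine (hHL n).injOn hv (zero_mem _) ?_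
  rw [← Nat.sub_add_cancel hj, pow_add, Module.End.mul_apply, h0, map_zero, map_zero]

variable (Vn e) in
def primitivePart (n : ℕ) : Submodule K V :=
  LinearMap.ker (e ^ (n + 1)) ⊓ Vn (-(n : ℤ))

theorem pow_apply_eq_zero_of_mem_primitivePart {n t : ℕ} (ht : n + 1 ≤ t) {b : V}
    (hb : b ∈ primitivePart Vn e n) : (e ^ t) b = 0 := by
  rw [← Nat.sub_add_cancel ht, pow_add, Module.End.mul_apply, LinearMap.mem_ker.mp hb.1,
    map_zero]

theorem le_primitivePart_sup_map (he : ∀ n : ℤ, ∀ v ∈ Vn n, e v ∈ Vn (n + 2))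
    (hHL : ∀ n : ℕ, Set.BijOn (⇑(e ^ n)) (Vn (-(n : ℤ)) : Set V) (Vn (n : ℤ))) (n : ℕ) :
    Vn (-(n : ℤ)) ≤ primitivePart Vn e n ⊔ (Vn (-((n + 2 : ℕ) : ℤ))).map e := by
  intro v hv
  have hv' : (e ^ (n + 1)) v ∈ Vn ((n + 2 : ℕ) : ℤ) := by
    convert pow_mem he (n + 1) hv using 2
    push_cast; ring
  obtain ⟨w, hw, hwv⟩ := (hHL (n + 2)).surjOn hv'
  have hew : e w ∈ Vn (-(n : ℤ)) := by
    convert he _ w hw using 2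
    push_cast; ring
  have hprim : v - e w ∈ primitivePart Vn e n := by
    refine mem_inf.mpr ⟨?_, sub_mem hv hew⟩
    rw [LinearMap.mem_ker, map_sub, ← Module.End.mul_apply, ← pow_succ, hwv, sub_self]
  rw [← sub_add_cancel v (e w)]
  exact add_mem_sup hprim ⟨w, hw, rfl⟩

theorem exists_forall_ge_neg_eq_bot [FiniteDimensional K V] (hdec : DirectSum.IsInternal Vn) :
    ∃ N : ℕ, ∀ n ≥ N, Vn (-(n : ℤ)) = ⊥ := by
  obtain ⟨b, hb⟩ :=
    (WellFoundedGT.finite_ne_bot_of_iSupIndep hdec.submodule_iSupIndep).bddBelow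
  refine ⟨(-b).toNat + 1, fun n hn => ?_⟩
  by_contra hne
  have := hb hne
  omega

variable (Vn e) in
noncomputable def primitiveBasis (n : ℕ) :
    Basis (Free.ChooseBasisIndex K (primitivePart Vn e n)) K (primitivePart Vn e n) :=
  Free.chooseBasis K _

variable (Vn e) in
abbrev StringIndex := Σ n : ℕ, Fin (n + 1) × Free.ChooseBasisIndex K (primitivePart Vn e n)

variable (Vn e) in
noncomputable def string (j : StringIndex Vn e) : V :=
  (e ^ (j.2.1 : ℕ)) (primitiveBasis Vn e j.1 j.2.2)

def stringDegree (j : StringIndex Vn e) : ℤ := -(j.1 : ℤ) + 2 * (j.2.1 : ℕ)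

theorem string_mem (he : ∀ n : ℤ, ∀ v ∈ Vn n, e v ∈ Vn (n + 2)) (j : StringIndex Vn e) :
    string Vn e j ∈ Vn (stringDegree j) :=
  pow_mem he _ (primitiveBasis Vn e j.1 j.2.2).2.2

theorem pow_apply_string (t : ℕ) (j : StringIndex Vn e) :
    (e ^ t) (string Vn e j) = (e ^ (t + j.2.1)) (primitiveBasis Vn e j.1 j.2.2) := by
  rw [string, ← Module.End.mul_apply, ← pow_add]

theorem apply_string (j : StringIndex Vn e) :
    e (string Vn e j) = (e ^ ((j.2.1 : ℕ) + 1)) (primitiveBasis Vn e j.1 j.2.2) := by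
  rw [string, ← Module.End.mul_apply, ← pow_succ']

theorem apply_string_mem_span (j : StringIndex Vn e) :
    e (string Vn e j) ∈ span K (Set.range (string Vn e)) := by
  obtain ⟨n, k, i⟩ := j
  rw [apply_string]
  dsimp only
  by_cases hk : (k : ℕ) < n
  · exact subset_span ⟨⟨n, ⟨k + 1, by omega⟩, i⟩, rfl⟩
  · rw [pow_apply_eq_zero_of_mem_primitivePart (by omega) (primitiveBasis Vn e n i).2]
    exact zero_mem _

theorem pow_apply_mem_span_string (t : ℕ) {v : V} (hv : v ∈ span K (Set.range (string Vn e))) :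
    (e ^ t) v ∈ span K (Set.range (string Vn e)) := by
  induction t with
  | zero => simpa using hv
  | succ t ih =>
    rw [pow_succ', Module.End.mul_apply]
    refine span_induction (p := fun v _ => e v ∈ span K (Set.range (string Vn e))) ?_
      (by simp) (fun _ _ _ _ hx hy => by rw [map_add]; exact add_mem hx hy)
      (fun _ _ _ hx => by rw [map_smul]; exact smul_mem _ _ hx) ih
    rintro _ ⟨j, rfl⟩
    exact apply_string_mem_span j

theorem primitivePart_le_span_string (n : ℕ) :
    primitivePart Vn e n ≤ span K (Set.range (string Vn e)) := by
  intro b hb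
  have hb' := mem_map_of_mem (f := (primitivePart Vn e n).subtype)
    ((primitiveBasis Vn e n).mem_span ⟨b, hb⟩)
  rw [map_span, ← Set.range_comp] at hb'
  refine span_mono ?_ hb'
  rintro _ ⟨i, rfl⟩
  exact ⟨⟨n, 0, i⟩, by simp [string]⟩

theorem span_string_eq_top [FiniteDimensional K V] (hdec : DirectSum.IsInternal Vn)
    (he : ∀ n : ℤ, ∀ v ∈ Vn n, e v ∈ Vn (n + 2))
    (hHL : ∀ n : ℕ, Set.BijOn (⇑(e ^ n)) (Vn (-(n : ℤ)) : Set V) (Vn (n : ℤ))) :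
    span K (Set.range (string Vn e)) = ⊤ := by
  set S := span K (Set.range (string Vn e))
  obtain ⟨N, hN⟩ := exists_forall_ge_neg_eq_bot hdec
  have hneg_of_le : ∀ d n : ℕ, N ≤ n + d → Vn (-(n : ℤ)) ≤ S := by
    intro d
    induction d with
    | zero => intro n hn; simp [hN n hn]
    | succ d ih =>
      intro n hn
      refine (le_primitivePart_sup_map he hHL n).trans (sup_le (primitivePart_le_span_string n) ?_)
      rintro _ ⟨v, hv, rfl⟩
      simpa using pow_apply_mem_span_string 1 (ih (n + 2) (by omega) hv)
  have hneg (n : ℕ) : Vn (-(n : ℤ)) ≤ S := hneg_of_le N n (by omega)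
  have hpos (n : ℕ) : Vn (n : ℤ) ≤ S := by
    intro w hw
    obtain ⟨v, hv, rfl⟩ := (hHL n).surjOn hw
    exact pow_apply_mem_span_string n (hneg n hv)
  rw [eq_top_iff, ← hdec.submodule_iSup_eq_top]
  refine iSup_le fun m => ?_
  obtain ⟨n, rfl | rfl⟩ := Int.eq_nat_or_neg m
  exacts [hpos n, hneg n]

theorem pow_proj_string_eq_zero (hdec : DirectSum.IsInternal Vn)
    (he : ∀ n : ℤ, ∀ v ∈ Vn n, e v ∈ Vn (n + 2)) {n₀ k₀ : ℕ} {j : StringIndex Vn e}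
    (hj : j.1 ≤ n₀) (hne : ¬(j.1 = n₀ ∧ (j.2.1 : ℕ) = k₀)) :
    (e ^ (n₀ - k₀)) (hdec.proj (-(n₀ : ℤ) + 2 * k₀) (string Vn e j)) = 0 := by
  by_cases hdeg : stringDegree j = -(n₀ : ℤ) + 2 * k₀
  · rw [hdec.proj_of_mem (hdeg ▸ string_mem he j), pow_apply_string]
    obtain ⟨n, k, i⟩ := j
    have := k.isLt
    simp only [stringDegree] at hdeg hj hne ⊢
    exact pow_apply_eq_zero_of_mem_primitivePart (by omega) (primitiveBasis Vn e n i).2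
  · rw [hdec.proj_of_mem_ne hdeg (string_mem he j), map_zero]

theorem coeff_eq_zero_of_sum_string_eq_zero (hdec : DirectSum.IsInternal Vn)
    (he : ∀ n : ℤ, ∀ v ∈ Vn n, e v ∈ Vn (n + 2))
    (hHL : ∀ n : ℕ, Set.BijOn (⇑(e ^ n)) (Vn (-(n : ℤ)) : Set V) (Vn (n : ℤ)))
    {s : Finset (StringIndex Vn e)} {g : StringIndex Vn e → K}
    (hsum : ∑ j ∈ s, g j • string Vn e j = 0) {j₀ : StringIndex Vn e} (hj₀ : j₀ ∈ s)
    (hmax : ∀ j ∈ s, j.1 ≤ j₀.1) : g j₀ = 0 := by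
  obtain ⟨n₀, k₀, i₀⟩ := j₀
  set b := primitiveBasis Vn e n₀
  set Φ := e ^ (n₀ - k₀) * hdec.proj (-(n₀ : ℤ) + 2 * (k₀ : ℕ))
  let emb : Free.ChooseBasisIndex K (primitivePart Vn e n₀) → StringIndex Vn e :=
    fun i => ⟨n₀, k₀, i⟩
  have hemb : Function.Injective emb := fun i i' h => by simpa [emb] using h
  have hΦ (i) : Φ (string Vn e (emb i)) = (e ^ n₀) (b i) := by
    rw [Module.End.mul_apply, hdec.proj_of_mem (m := -(n₀ : ℤ) + 2 * (k₀ : ℕ))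
      (string_mem he (emb i)), pow_apply_string,
      Nat.sub_add_cancel k₀.is_le]
  have hcomb : (e ^ n₀) (∑ i ∈ s.preimage emb hemb.injOn, g (emb i) • (b i : V)) = 0 := by
    calc (e ^ n₀) (∑ i ∈ s.preimage emb hemb.injOn, g (emb i) • (b i : V))
        = ∑ i ∈ s.preimage emb hemb.injOn, g (emb i) • Φ (string Vn e (emb i)) := by
          simp only [map_sum, map_smul, hΦ]
      _ = ∑ j ∈ s, g j • Φ (string Vn e j) := by
          refine Finset.sum_preimage emb s _ (fun j => g j • Φ (string Vn e j)) fun j hj hj' => ?_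
          rw [Module.End.mul_apply, pow_proj_string_eq_zero hdec he (hmax j hj), smul_zero]
          obtain ⟨n, k, i⟩ := j
          rintro ⟨rfl, hk⟩
          exact hj' ⟨i, by simpa [emb] using Fin.ext hk.symm⟩
      _ = Φ (∑ j ∈ s, g j • string Vn e j) := by simp only [map_sum, map_smul]
      _ = 0 := by rw [hsum, map_zero]
  have hzero := eq_zero_of_pow_apply_eq_zero hHL le_rfl
    (sum_mem fun i _ => smul_mem _ _ (b i).2.2) hcomb
  have hli : LinearIndependent K fun i => (b i : V) :=
    b.linearIndependent.map' _ (ker_subtype _)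
  exact linearIndependent_iff'.mp hli _ _ hzero i₀ (Finset.mem_preimage.mpr hj₀)

theorem linearIndependent_string (hdec : DirectSum.IsInternal Vn)
    (he : ∀ n : ℤ, ∀ v ∈ Vn n, e v ∈ Vn (n + 2))
    (hHL : ∀ n : ℕ, Set.BijOn (⇑(e ^ n)) (Vn (-(n : ℤ)) : Set V) (Vn (n : ℤ))) :
    LinearIndependent K (string Vn e) := by
  classical
  refine linearIndependent_iff'.mpr fun s g hsum => ?_
  by_contra! ⟨j, hj, hgj⟩
  obtain ⟨j₀, hj₀, hmax⟩ :=
    (s.filter (g · ≠ 0)).exists_max_image (·.1) ⟨j, Finset.mem_filter.mpr ⟨hj, hgj⟩⟩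
  have hsum' : ∑ j ∈ s.filter (g · ≠ 0), g j • string Vn e j = 0 := by
    rwa [Finset.sum_filter_of_ne fun _ _ h => left_ne_zero_of_smul h]
  exact (Finset.mem_filter.mp hj₀).2
    (coeff_eq_zero_of_sum_string_eq_zero hdec he hHL hsum' hj₀ hmax)

section Lowering

variable [FiniteDimensional K V] (hdec : DirectSum.IsInternal Vn)
  (he : ∀ n : ℤ, ∀ v ∈ Vn n, e v ∈ Vn (n + 2))
  (hHL : ∀ n : ℕ, Set.BijOn (⇑(e ^ n)) (Vn (-(n : ℤ)) : Set V) (Vn (n : ℤ)))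

noncomputable def stringBasis : Basis (StringIndex Vn e) K V :=
  Basis.mk (linearIndependent_string hdec he hHL) (span_string_eq_top hdec he hHL).ge

variable (K) in
def loweringCoeff (n k : ℕ) : K := k * (n - k + 1)

-- At `k = 0` the truncated exponent `k - 1` is harmless: the coefficient vanishes.
noncomputable def lowering : Module.End K V :=
  (stringBasis hdec he hHL).constr K fun j =>
    loweringCoeff K j.1 j.2.1 • (e ^ ((j.2.1 : ℕ) - 1)) (primitiveBasis Vn e j.1 j.2.2)

theorem lowering_string (j : StringIndex Vn e) :
    lowering hdec he hHL (string Vn e j) =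
      loweringCoeff K j.1 j.2.1 • (e ^ ((j.2.1 : ℕ) - 1)) (primitiveBasis Vn e j.1 j.2.2) := by
  rw [← Basis.mk_apply (linearIndependent_string hdec he hHL) (span_string_eq_top hdec he hHL).ge]
  exact Basis.constr_basis _ _ _ _

theorem apply_lowering_string (n : ℕ) (k : Fin (n + 1))
    (i : Free.ChooseBasisIndex K (primitivePart Vn e n)) :
    e (lowering hdec he hHL (string Vn e ⟨n, k, i⟩)) =
      loweringCoeff K n k • (e ^ (k : ℕ)) (primitiveBasis Vn e n i) := by
  rw [lowering_string, map_smul]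
  obtain hk | hk := Nat.eq_zero_or_pos k
  · simp [loweringCoeff, hk]
  · rw [← Module.End.mul_apply, ← pow_succ', Nat.sub_add_cancel hk]

theorem lowering_apply_string (n : ℕ) (k : Fin (n + 1))
    (i : Free.ChooseBasisIndex K (primitivePart Vn e n)) :
    lowering hdec he hHL (e (string Vn e ⟨n, k, i⟩)) =
      loweringCoeff K n ((k : ℕ) + 1) • (e ^ (k : ℕ)) (primitiveBasis Vn e n i) := by
  by_cases hk : (k : ℕ) < n
  · have : e (string Vn e ⟨n, k, i⟩) = string Vn e ⟨n, ⟨k + 1, by omega⟩, i⟩ := apply_string _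
    rw [this, lowering_string]
    simp only [Nat.add_sub_cancel]
  · have hkn : (k : ℕ) = n := by omega
    rw [apply_string, pow_apply_eq_zero_of_mem_primitivePart (n := n) (by dsimp only; omega)
      (primitiveBasis Vn e n i).2, map_zero, hkn, loweringCoeff]
    simp

theorem commutator_lowering {h : Module.End K V} (hh : ∀ n : ℤ, ∀ v ∈ Vn n, h v = (n : K) • v) :
    e * lowering hdec he hHL - lowering hdec he hHL * e = h := by
  refine LinearMap.ext_on_range (span_string_eq_top hdec he hHL) fun ⟨n, k, i⟩ => ?_
  rw [hh _ _ (string_mem he _), LinearMap.sub_apply, Module.End.mul_apply, Module.End.mul_apply,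
    apply_lowering_string, lowering_apply_string, ← sub_smul]
  congr 1
  simp only [loweringCoeff, stringDegree]
  push_cast
  ring

theorem lowering_mem {m : ℤ} {v : V} (hv : v ∈ Vn m) :
    lowering hdec he hHL v ∈ Vn (m - 2) := by
  refine hdec.mapsTo_of_spanning_homogeneous stringDegree (string_mem he)
    (span_string_eq_top hdec he hHL) (fun ⟨n, k, i⟩ => ?_) hv
  rw [lowering_string]
  obtain hk | hk := Nat.eq_zero_or_pos k
  · simp [loweringCoeff, hk]
  · refine smul_mem _ _ ?_
    convert pow_mem he ((k : ℕ) - 1) (primitiveBasis Vn e n i).2.2 using 2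
    simp only [stringDegree]
    omega

end Lowering

theorem eq_zero_of_commute [FiniteDimensional K V] (hdec : DirectSum.IsInternal Vn)
    (he : ∀ n : ℤ, ∀ v ∈ Vn n, e v ∈ Vn (n + 2))
    (hHL : ∀ n : ℕ, Set.BijOn (⇑(e ^ n)) (Vn (-(n : ℤ)) : Set V) (Vn (n : ℤ)))
    {D : Module.End K V} (hD : ∀ m : ℤ, ∀ v ∈ Vn m, D v ∈ Vn (m - 2)) (hcomm : Commute e D) :
    D = 0 := by
  refine LinearMap.ext_on_range (span_string_eq_top hdec he hHL) fun ⟨n, k, i⟩ => ?_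
  have hb := (primitiveBasis Vn e n i).2
  have hDb : D (primitiveBasis Vn e n i) = 0 := by
    refine eq_zero_of_pow_apply_eq_zero hHL (n := n + 2) (j := n + 1) (by omega) ?_ ?_
    · convert hD _ _ hb.2 using 2
      push_cast; ring
    · rw [← Module.End.mul_apply, (hcomm.pow_left (n + 1)).eq, Module.End.mul_apply,
        pow_apply_eq_zero_of_mem_primitivePart le_rfl hb, map_zero]
  rw [string, ← Module.End.mul_apply, ← (hcomm.pow_left _).eq, Module.End.mul_apply, hDb,
    map_zero, LinearMap.zero_apply]

end Lefschetz

/-- Let `V = ⨁ₙ Vₙ` be a finite dimensional graded vector space, `e` an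
operator mapping `Vₙ` to `Vₙ₊₂`, `h` the operator acting on `Vₙ` by the scalar
`n`, and suppose the hard Lefschetz property holds: `eⁿ : V₋ₙ → Vₙ` is an
isomorphism for all `n ≥ 0`.  Then there is a unique linear operator `f`
mapping `Vₙ` to `Vₙ₋₂` such that `(e, h, f)` is an `sl₂`-triple, i.e.
`[h, e] = 2e`, `[h, f] = -2f`, `[e, f] = h`. -/
theorem stmt7 (V : Type) [AddCommGroup V] [Module ℂ V] [FiniteDimensional ℂ V]
    (Vn : ℤ → Submodule ℂ V) (hdec : DirectSum.IsInternal Vn)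
    (e h : Module.End ℂ V)
    (he : ∀ n : ℤ, ∀ v ∈ Vn n, e v ∈ Vn (n + 2))
    (hh : ∀ n : ℤ, ∀ v ∈ Vn n, h v = (n : ℂ) • v)
    (hHL : ∀ n : ℕ, Set.BijOn (⇑(e ^ n)) (Vn (-(n : ℤ)) : Set V) (Vn (n : ℤ))) :
    ∃! f : Module.End ℂ V,
      (∀ n : ℤ, ∀ v ∈ Vn n, f v ∈ Vn (n - 2)) ∧
      h * e - e * h = (2 : ℂ) • e ∧
      h * f - f * h = (-2 : ℂ) • f ∧
      e * f - f * e = h := by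
  set L := Lefschetz.lowering hdec he hHL
  have hLmem (m : ℤ) (v : V) (hv : v ∈ Vn m) : L v ∈ Vn (m - 2) :=
    Lefschetz.lowering_mem hdec he hHL hv
  have hL : e * L - L * e = h := Lefschetz.commutator_lowering hdec he hHL hh
  refine ⟨L, ⟨hLmem, ?_, ?_, hL⟩, ?_⟩
  · exact_mod_cast hdec.commutator_eq_smul_of_mapsTo hh he
  · exact_mod_cast hdec.commutator_eq_smul_of_mapsTo hh (d := -2) hLmem
  · rintro f ⟨hf, -, -, hef⟩
    refine sub_eq_zero.mp (Lefschetz.eq_zero_of_commute hdec he hHL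
      (fun m v hv => sub_mem (hf m v hv) (hLmem m v hv)) ?_)
    rw [Commute, SemiconjBy, mul_sub, sub_mul, sub_eq_sub_iff_sub_eq_sub, hef, hL]
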